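/- Suppose each T_m (m = 1,…,M) has at least two elements, each individual contrast c_m is distinctive (c_m(s,t)=δ_{s=t}), and c : (T₁×⋯×T_M)² → {0,1} is expressible as c(T,T') = h(c₁(t₁,t'₁),…,c_M(t_M,t'_M)) for some function h : {0,1}^M → {0,1}. Assume c is admissible (c=1 is an equivalence relation, in particular reflexive, so h(1,…,1)=1) and h is monotone (v ≤ v' componentwise implies h(v) ≤ h(v')). Then there exists a subset S ⊆ {1,…,M} such that h(v) = ∏_{i∈S} v_i for all v ∈ {0,1}^M; i.e., c(T,T') = ∏_{i∈S} δ_{t_i = t'_i}. -/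
import Mathlib


theorem stmt_5 {M : ℕ} {τ : Fin M → Type u} [∀ m, Nontrivial (τ m)]
    [∀ m, DecidableEq (τ m)] (h : (Fin M → Bool) → Bool)
    (hmono : ∀ v v' : Fin M → Bool, (∀ m, v m ≤ v' m) → h v ≤ h v')
    (hadm : Equivalence (fun T T' : (∀ m, τ m) =>
      h (fun m => decide (T m = T' m)) = true)) :
    ∃ S : Finset (Fin M), ∀ v : Fin M → Bool,
      (h v = true ↔ ∀ i ∈ S, v i = true) := by
  -- choose two distinct elements in each factor
  have hab : ∀ m, ∃ a b : τ m, a ≠ b := fun m => exists_pair_ne (τ m)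
  choose a b hne using hab
  -- h of all-true is true (reflexivity)
  have htrue : h (fun _ => true) = true := by
    have := hadm.refl a
    simpa using this
  -- boolean transitivity
  have htrans : ∀ u w : Fin M → Bool, h u = true → h w = true →
      h (fun m => u m == w m) = true := by
    intro u w hu hw
    have e1 : (fun m => decide (a m = (if u m then a m else b m))) = u := by
      funext m; cases hum : u m <;> simp [hum, hne m]
    have e2 : (fun m => decide ((if u m then a m else b m) =
        (if u m == w m then a m else b m))) = w := by
      funext m
      cases hum : u m <;> cases hwm : w m <;> simp [hum, hwm, hne m, (hne m).symm]
    have e3 : (fun m => decide (a m = (if u m == w m then a m else b m))) =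
        (fun m => u m == w m) := by
      funext m; cases hum : u m <;> cases hwm : w m <;> simp [hum, hwm, hne m]
    have h1 : h (fun m => decide (a m = (if u m then a m else b m))) = true := by
      rw [e1]; exact hu
    have h2 : h (fun m => decide ((if u m then a m else b m) =
        (if u m == w m then a m else b m))) = true := by rw [e2]; exact hw
    have h3 := hadm.trans h1 h2
    rw [← e3]; exact h3
  -- key induction
  have key : ∀ A : Finset (Fin M), (∀ i ∈ A, h (fun m => decide (m ≠ i)) = true) →
      h (fun m => decide (m ∉ A)) = true := by
    intro A
    induction A using Finset.induction with
    | empty => intro _; simpa using htrue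
    | @insert j A hj ih =>
      intro hA
      have h1 : h (fun m => decide (m ∉ A)) = true :=
        ih fun i hi => hA i (Finset.mem_insert_of_mem hi)
      have h2 : h (fun m => decide (m ≠ j)) = true := hA j (Finset.mem_insert_self j A)
      have h3 := htrans _ _ h1 h2
      have e : (fun m => decide (m ∉ A) == decide (m ≠ j)) =
          (fun m => decide (m ∉ insert j A)) := by
        funext m
        by_cases hmj : m = j
        · subst hmj; simp [hj]
        · by_cases hmA : m ∈ A <;> simp [hmj, hmA]
      rw [← e]; exact h3
  refine ⟨Finset.univ.filter (fun i => h (fun m => decide (m ≠ i)) = false), fun v => ?_⟩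
  constructor
  · intro hv i hi
    simp only [Finset.mem_filter, Finset.mem_univ, true_and] at hi
    by_contra hvi
    have hvi' : v i = false := by simpa using hvi
    have hle : h v ≤ h (fun m => decide (m ≠ i)) := by
      apply hmono
      intro m
      by_cases hmi : m = i
      · subst hmi; simp [hvi']
      · simp [hmi]
    rw [hv, hi] at hle
    exact absurd hle (by simp)
  · intro hS
    have hk := key (Finset.univ.filter (fun i => v i = false)) ?_
    · have e : (fun m => decide (m ∉ Finset.univ.filter (fun i => v i = false))) = v := by
        funext m; cases hvm : v m <;> simp [hvm]
      rwa [e] at hk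
    · intro i hi
      simp only [Finset.mem_filter, Finset.mem_univ, true_and] at hi
      by_contra hfi
      have hfi' : h (fun m => decide (m ≠ i)) = false := by
        cases hx : h (fun m => decide (m ≠ i)) <;> simp_all
      have hfi'' : (h fun m => !decide (m = i)) = false := by simpa using hfi'
      have := hS i (by simp [hfi''])
      rw [this] at hi
      exact absurd hi (by simp)
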